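/- arXiv:1711.02802 — 3 statements merged into one kernel-verified Lean document; each statement's English description precedes it below -/
import Mathlib

section
/- Let R be a commutative ring, p a prime, and M a free R-module with basis {e_s}_{s ∈ S}. Under the cyclic permutation action of C_p on M^{⊗p}, there is a C_p-stable direct sum decomposition M^{⊗p} = M₁ ⊕ M₂, where M₁ is the free R-submodule with basis {e_s^{⊗p} : s ∈ S}, on which C_p acts trivially, and M₂ is the R-submodule spanned by the basis tensors e_{s₁} ⊗ ⋯ ⊗ e_{s_p} in which not all indices s_i are equal, and M₂ is a free module over the group ring R[C_p]. -/
/-!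
The basis tensors `e_{s₁} ⊗ ⋯ ⊗ e_{s_p}` of `M^{⊗p}` are indexed by functions `f : Fin p → S`, and
the generator of `C_p` permutes them by rotating `f`. The constant functions are fixed, giving `M₁`.
On the remaining functions `ZMod p` acts freely: the stabilizer of `f` is a subgroup of a group of
prime order, and it cannot be everything unless `f` is constant. Choosing one function in each
orbit therefore splits the basis of `M₂` as `ZMod p × J`, with the generator acting as `+1` on the
first coordinate.
-/

open scoped TensorProduct

universe u v w

theorem Set.range_const_eq_diagonal_of_nonempty (α β : Type*) [Nonempty α] :
    range (Function.const α) = {f : α → β | ∀ x y, f x = f y} := by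
  ext f
  refine ⟨?_, fun h => ⟨f (Classical.arbitrary α), funext fun x => h _ x⟩⟩
  rintro ⟨b, rfl⟩ x y
  rfl

namespace AddAction

variable {G X : Type*} [AddGroup G] [AddAction G X]

noncomputable def prodOrbitRelQuotientEquivOfFree
    (hfree : ∀ (g : G) (x : X), g +ᵥ x = x → g = 0) : G × orbitRel.Quotient G X ≃ X :=
  Equiv.ofBijective (fun gq => gq.1 +ᵥ gq.2.out) <| by
    constructor
    · rintro ⟨g, q⟩ ⟨h, r⟩ (hgh : g +ᵥ q.out = h +ᵥ r.out)
      have hqr : q = r := by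
        rw [← Quotient.out_equiv_out]
        exact ⟨-g + h, by simpa [add_vadd, neg_vadd_eq_iff] using hgh.symm⟩
      subst hqr
      have : -h + g = 0 := hfree _ q.out (by rw [add_vadd, hgh, neg_vadd_vadd])
      simp [neg_add_eq_zero.mp this]
    · intro x
      obtain ⟨g, hg⟩ := Quotient.mk_out (s := orbitRel G X) x
      exact ⟨(-g, ⟦x⟧), by simp [← hg]⟩

theorem prodOrbitRelQuotientEquivOfFree_add (hfree : ∀ (g : G) (x : X), g +ᵥ x = x → g = 0)
    (g h : G) (q : orbitRel.Quotient G X) :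
    prodOrbitRelQuotientEquivOfFree hfree (g + h, q) =
      g +ᵥ prodOrbitRelQuotientEquivOfFree hfree (h, q) :=
  add_vadd g h q.out

end AddAction

namespace Module.Basis

variable {ι X R N : Type*} [Semiring R] [AddCommMonoid N] [Module R N]

noncomputable def spanImage (c : Basis X R N) {T : Set X} (φ : ι ≃ T) :
    Basis ι R (Submodule.span R (c '' T)) :=
  (Basis.span (c.linearIndependent.comp _ (Subtype.val_injective.comp φ.injective))).map
    (LinearEquiv.ofEq _ _ (by
      rw [Set.range_comp, Set.range_comp, φ.range_eq_univ, Set.image_univ, Subtype.range_coe]))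

theorem spanImage_apply (c : Basis X R N) {T : Set X} (φ : ι ≃ T) (i : ι) :
    (c.spanImage φ i : N) = c (φ i) := by
  simp [spanImage, Basis.span_apply]

variable {G : Type*} [AddGroup G] [AddAction G X] (c : Basis X R N) {σ : N →ₗ[R] N} {g₀ : G}

theorem map_eq_self_of_mem_span_image (hσ : ∀ x, σ (c x) = c (g₀ +ᵥ x)) {T : Set X}
    (hT : ∀ x ∈ T, g₀ +ᵥ x = x) {y : N} (hy : y ∈ Submodule.span R (c '' T)) : σ y = y := by
  refine LinearMap.eqOn_span (g := LinearMap.id) ?_ hy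
  rintro _ ⟨x, hx, rfl⟩
  rw [hσ, hT x hx, LinearMap.id_apply]

theorem map_mem_span_image (hσ : ∀ x, σ (c x) = c (g₀ +ᵥ x)) (T : SubAddAction G X) {y : N}
    (hy : y ∈ Submodule.span R (c '' T)) : σ y ∈ Submodule.span R (c '' T) := by
  have hle : Submodule.span R (c '' T) ≤ (Submodule.span R (c '' T)).comap σ := by
    refine Submodule.span_le.mpr ?_
    rintro _ ⟨x, hx, rfl⟩
    rw [SetLike.mem_coe, Submodule.mem_comap, hσ]
    exact Submodule.subset_span ⟨_, T.vadd_mem g₀ hx, rfl⟩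
  exact hle hy

theorem exists_basis_prod_orbitRel_quotient (hσ : ∀ x, σ (c x) = c (g₀ +ᵥ x))
    (T : SubAddAction G X) (hfree : ∀ (g : G) (x : T), g +ᵥ x = x → g = 0) :
    ∃ w : Basis (G × AddAction.orbitRel.Quotient G T) R (Submodule.span R (c '' T)),
      ∀ g q, σ (w (g, q)) = w (g₀ + g, q) := by
  refine ⟨c.spanImage (AddAction.prodOrbitRelQuotientEquivOfFree hfree), fun g q => ?_⟩
  rw [spanImage_apply, spanImage_apply, hσ, AddAction.prodOrbitRelQuotientEquivOfFree_add,
    SubAddAction.val_vadd]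

end Module.Basis

namespace Fin

variable (p : ℕ) [NeZero p] (S : Type*)

/-- `(k +ᵥ f) i = f (i - k)`; the sign makes `1` act as reindexing along `finRotate p`. -/
instance rotateAddAction : AddAction (ZMod p) (Fin p → S) where
  vadd k f i := f (i - (ZMod.finEquiv p).symm k)
  zero_vadd f := funext fun i => show f (i - _) = f i by simp
  add_vadd k l f := funext fun i => show f (i - _) = f (i - _ - _) by simp [sub_sub]

variable {p S} in
theorem rotate_vadd_apply (k : ZMod p) (f : Fin p → S) (i : Fin p) :
    (k +ᵥ f) i = f (i - (ZMod.finEquiv p).symm k) := rfl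

def nonconstant : SubAddAction (ZMod p) (Fin p → S) where
  carrier := {f | ∀ i j, f i = f j}ᶜ
  vadd_mem' k f hf h := hf fun i j => by
    simpa [rotate_vadd_apply] using h (i + (ZMod.finEquiv p).symm k) (j + (ZMod.finEquiv p).symm k)

theorem coe_nonconstant : (nonconstant p S : Set (Fin p → S)) = {f | ∀ i j, f i = f j}ᶜ := rfl

variable {p S}

theorem vadd_eq_self_of_forall_eq {f : Fin p → S} (hf : ∀ i j, f i = f j) (k : ZMod p) :
    k +ᵥ f = f :=
  funext fun i => hf _ i

theorem forall_eq_of_stabilizer_eq_top {f : Fin p → S} (h : AddAction.stabilizer (ZMod p) f = ⊤)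
    (i j : Fin p) : f i = f j := by
  have : ZMod.finEquiv p (i - j) +ᵥ f = f :=
    AddAction.mem_stabilizer_iff.mp (h ▸ AddSubgroup.mem_top _)
  simpa [rotate_vadd_apply] using (congrFun this i).symm

theorem eq_zero_of_vadd_eq_self [Fact p.Prime] (k : ZMod p) (f : nonconstant p S)
    (hk : k +ᵥ f = f) : k = 0 := by
  have : Fact (Nat.card (ZMod p)).Prime := by rwa [Nat.card_zmod]
  rcases (AddAction.stabilizer (ZMod p) (f : Fin p → S)).eq_bot_or_eq_top_of_prime_card with h | h
  · rw [← AddSubgroup.mem_bot, ← h]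
    exact congrArg Subtype.val hk
  · exact absurd (forall_eq_of_stabilizer_eq_top h) f.2

theorem reindex_finRotate_piTensorProduct {R M : Type*} [CommSemiring R] [AddCommMonoid M]
    [Module R M] (b : Module.Basis S R M) (f : Fin p → S) :
    PiTensorProduct.reindex R (fun _ => M) (finRotate p) (Basis.piTensorProduct (fun _ => b) f) =
      Basis.piTensorProduct (fun _ => b) ((1 : ZMod p) +ᵥ f) := by
  have hrot : (1 : ZMod p) +ᵥ f = f ∘ (finRotate p).symm := funext fun i => by
    simp [rotate_vadd_apply]
  rw [Basis.piTensorProduct_apply, Basis.piTensorProduct_apply, PiTensorProduct.reindex_tprod,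
    hrot]
  rfl

end Fin

theorem cyclic_decomposition_of_tensor_power
    (R : Type u) [CommRing R] (p : ℕ) (hp : p.Prime)
    (S : Type v) (M : Type w) [AddCommGroup M] [Module R M] (b : Module.Basis S R M) :
    -- the generator of `C_p` acting on `M^{⊗p}` by cyclic permutation of the factors:
    let σ : (⨂[R] (_ : Fin p), M) ≃ₗ[R] ⨂[R] (_ : Fin p), M :=
      PiTensorProduct.reindex R (fun _ : Fin p => M) (finRotate p)
    -- `M₁` is the span of the basis tensors `e_s ⊗ ⋯ ⊗ e_s`:
    let M₁ : Submodule R (⨂[R] (_ : Fin p), M) :=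
      Submodule.span R (Set.range fun s : S => ⨂ₜ[R] (_ : Fin p), b s)
    -- `M₂` is the span of the basis tensors `e_{s₁} ⊗ ⋯ ⊗ e_{s_p}` with not all `sᵢ` equal:
    let M₂ : Submodule R (⨂[R] (_ : Fin p), M) :=
      Submodule.span R
        {x | ∃ f : Fin p → S, (¬ ∀ i j : Fin p, f i = f j) ∧ x = ⨂ₜ[R] i, b (f i)}
    -- `M^{⊗p} = M₁ ⊕ M₂`:
    IsCompl M₁ M₂ ∧
    -- `M₁` is free with basis `{e_s^{⊗p} : s ∈ S}`:
    (∃ w₁ : Module.Basis S R M₁, ∀ s : S, (w₁ s : ⨂[R] (_ : Fin p), M) = ⨂ₜ[R] (_ : Fin p), b s) ∧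
    -- `C_p` acts trivially on `M₁`:
    (∀ x ∈ M₁, σ x = x) ∧
    -- `M₂` is `C_p`-stable:
    (∀ x ∈ M₂, σ x ∈ M₂) ∧
    -- `M₂` is a free `R[C_p]`-module: it admits an `R`-basis indexed by `C_p × J`
    -- freely permuted by the generator `σ`:
    (∃ (J : Type (max u v w)) (w₂ : Module.Basis (ZMod p × J) R M₂),
      ∀ (i : ZMod p) (j : J),
        σ ((w₂ (i, j) : ⨂[R] (_ : Fin p), M)) = (w₂ (i + 1, j) : ⨂[R] (_ : Fin p), M)) := by
  intro σ M₁ M₂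
  have : Fact p.Prime := ⟨hp⟩
  let c := Basis.piTensorProduct fun _ : Fin p => b
  have hc (f : Fin p → S) : c f = ⨂ₜ[R] i, b (f i) := Basis.piTensorProduct_apply _ f
  have hσ (f : Fin p → S) : σ.toLinearMap (c f) = c ((1 : ZMod p) +ᵥ f) :=
    Fin.reindex_finRotate_piTensorProduct b f
  have hM₁ : M₁ = Submodule.span R (c '' {f | ∀ i j, f i = f j}) := by
    rw [← Set.range_const_eq_diagonal_of_nonempty, ← Set.range_comp]
    simp only [M₁, Function.comp_def, hc, Function.const_apply]
  have hM₂ : M₂ = Submodule.span R (c '' Fin.nonconstant p S) := by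
    simp only [M₂]
    congr 1
    ext x
    simp [hc, eq_comm, Fin.coe_nonconstant]
  refine ⟨?_, ?_, fun x hx => ?_, fun x hx => ?_, ?_⟩
  · rw [hM₁, hM₂, Fin.coe_nonconstant]
    exact c.linearIndependent.isCompl_span_image c.span_eq isCompl_compl
  · let φ : S ≃ {f : Fin p → S | ∀ i j, f i = f j} :=
      (Equiv.ofInjective _ Function.const_injective).trans
        (Equiv.setCongr (Set.range_const_eq_diagonal_of_nonempty _ _))
    exact ⟨(c.spanImage φ).map (LinearEquiv.ofEq _ _ hM₁.symm), fun s => by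
      simp [c.spanImage_apply, φ, hc]⟩
  · rw [hM₁] at hx
    exact c.map_eq_self_of_mem_span_image hσ (fun f hf => Fin.vadd_eq_self_of_forall_eq hf 1) hx
  · rw [hM₂] at hx ⊢
    exact c.map_mem_span_image hσ _ hx
  · obtain ⟨w₂, hw₂⟩ := c.exists_basis_prod_orbitRel_quotient hσ _ Fin.eq_zero_of_vadd_eq_self
    refine ⟨_, (w₂.map (LinearEquiv.ofEq _ _ hM₂.symm)).reindex
      (Equiv.prodCongr (Equiv.refl _) Equiv.ulift.{max u w}).symm, fun i j => ?_⟩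
    simpa [add_comm i 1] using hw₂ i j.down
end

section
/- Let B be a free R̃-module and let ∇₀: B/pB → (B/pB) ⊗_R Ω¹_{R/k} be a connection relative to k. Choose any additive map ∇′₀: B → B ⊗_{R̃} Ω¹_{R̃/W₂(k)} whose reduction modulo p equals ∇₀. Then the formula ∇̃(f ⊗ x) = x ⊗ df + f · (F̃*∇′₀)(x), where (F̃*∇′₀)(x) denotes the image of ∇′₀(x) ∈ B ⊗_{R̃} Ω¹_{R̃/W₂(k)} under the map b ⊗ ω ↦ (1 ⊗ b) ⊗ F̃*ω into F̃*B ⊗_{R̃} Ω¹_{R̃/W₂(k)}, defines a connection ∇̃ on F̃*B relative to W₂(k); this connection is independent of the choice of the lift ∇′₀; and the reduction of ∇̃ modulo p is the canonical Frobenius-pullback connection on F*(B/pB) = R ⊗_{F,R} (B/pB), namely the connection determined by f ⊗ x̄ ↦ x̄ ⊗ df. -/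
/-!
In `W₂(k)` we have `p² = 0`. For a Frobenius lift `F̃` one has
`d(F̃ b) = d(bᵖ + p c) = p (bᵖ⁻¹ db + dc)`, so `F̃^*` of every 1-form is divisible by `p`, and
`H(p u) = F̃(p) H(u) = p H(u) = 0`. Since `p (B ⊗ Ω¹)` is the kernel of reduction modulo `p`,
`H ∘ ∇′₀` depends only on `∇₀`. Applied to the Leibniz rule of `∇₀`, this gives
`H(∇′₀(c x)) = F̃(c) H(∇′₀ x) + (1 ⊗ x) ⊗ d(F̃ c)`, which is exactly the balancing condition making
`f ⊗ x ↦ (1 ⊗ x) ⊗ df + f H(∇′₀ x)` well defined on `R̃ ⊗_{F̃,R̃} B`; its Leibniz rule comes from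
that of `d`, and modulo `p` the term `f H(∇′₀ x)` vanishes.
-/

open scoped TensorProduct

universe u

/-- A copy of the ring `R`, serving as the source of the ring endomorphism `f : R → R`. -/
def TwistSrc {R : Type u} [CommRing R] (f : R →+* R) : Type u := R

instance {R : Type u} [CommRing R] (f : R →+* R) : CommRing (TwistSrc f) :=
  inferInstanceAs (CommRing R)

/-- `R` is an algebra over its copy `TwistSrc f` via `f`. -/
instance {R : Type u} [CommRing R] (f : R →+* R) : Algebra (TwistSrc f) R :=
  (show TwistSrc f →+* R from f).toAlgebra

instance (priority := 100) {R : Type u} [CommRing R] (f : R →+* R) (V : Type*)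
    [AddCommGroup V] [Module R V] : Module (TwistSrc f) V :=
  inferInstanceAs (Module R V)

/-- The base change `R ⊗_{f,R} V` of an `R`-module `V` along the ring endomorphism
`f : R → R`; it is an `R`-module via the left tensor factor. -/
abbrev Twist {R : Type u} [CommRing R] (f : R →+* R) (V : Type*) [AddCommGroup V]
    [Module R V] : Type _ :=
  TensorProduct (TwistSrc f) R V

theorem TruncatedWittVector.natCast_sq_eq_zero (p : ℕ) [Fact p.Prime] (k : Type*) [CommRing k]
    [CharP k p] : (p : TruncatedWittVector p 2 k) ^ 2 = 0 := by
  rw [← map_natCast (WittVector.truncate 2), ← map_pow]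
  ext j
  rw [WittVector.coeff_truncate, WittVector.coeff_p_pow_eq_zero p k j.isLt.ne]
  exact (TruncatedWittVector.coeff_zero p 2 k j).symm

theorem TruncatedWittVector.natCast_sq_eq_zero_of_algebra (p : ℕ) [Fact p.Prime] (k A : Type*)
    [CommRing k] [CharP k p] [CommRing A] [Algebra (TruncatedWittVector p 2 k) A] :
    (p : A) ^ 2 = 0 := by
  rw [← map_natCast (algebraMap (TruncatedWittVector p 2 k) A), ← map_pow,
    natCast_sq_eq_zero, map_zero]

namespace KaehlerDifferential

variable {R A : Type*} [CommRing R] [CommRing A] [Algebra R A] {p : ℕ} {Ft : A →+* A}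

theorem exists_D_eq_smul_of_frobeniusLift (hFt : ∀ x : A, Ft x - x ^ p ∈ Ideal.span {(p : A)})
    (b : A) : ∃ η, D R A (Ft b) = (p : A) • η := by
  obtain ⟨c, hc⟩ := Ideal.mem_span_singleton'.mp (hFt b)
  refine ⟨b ^ (p - 1) • D R A b + D R A c, ?_⟩
  rw [show Ft b = b ^ p + c * p by linear_combination -hc, map_add, Derivation.leibniz,
    Derivation.leibniz_pow, Derivation.map_natCast, smul_zero, zero_add, smul_add,
    ← Nat.cast_smul_eq_nsmul A]

theorem exists_pullback_eq_smul_of_frobeniusLift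
    (hFt : ∀ x : A, Ft x - x ^ p ∈ Ideal.span {(p : A)}) (Φ : Ω[A⁄R] →+ Ω[A⁄R])
    (hΦ : ∀ a b : A, Φ (a • D R A b) = Ft a • D R A (Ft b)) (ω : Ω[A⁄R]) :
    ∃ η, Φ ω = (p : A) • η := by
  choose η hη using exists_D_eq_smul_of_frobeniusLift (R := R) hFt
  have hω : ω ∈ Submodule.span A (Set.range (D R A)) := by
    rw [span_range_derivation]; trivial
  obtain ⟨c, rfl⟩ := Finsupp.mem_span_range_iff_exists_finsupp.mp hω
  refine ⟨c.sum fun b a => Ft a • η b, ?_⟩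
  simp only [map_finsuppSum, hΦ, hη, Finsupp.smul_sum, smul_comm (Ft _)]

end KaehlerDifferential

namespace Twist

open KaehlerDifferential

variable {A : Type u} [CommRing A] (f : A →+* A) {V : Type*} [AddCommGroup V] [Module A V]

theorem tmul_eq_smul_one_tmul (a : A) (v : V) :
    (a ⊗ₜ[TwistSrc f] v : Twist f V) = a • ((1 : A) ⊗ₜ[TwistSrc f] v) := by
  rw [TensorProduct.smul_tmul', smul_eq_mul, mul_one]

theorem one_tmul_smul (c : A) (v : V) :
    ((1 : A) ⊗ₜ[TwistSrc f] (c • v) : Twist f V) = f c • ((1 : A) ⊗ₜ[TwistSrc f] v) := by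
  rw [← tmul_eq_smul_one_tmul, ← mul_one (f c)]
  exact (TensorProduct.smul_tmul (show TwistSrc f from c) (1 : A) v).symm

theorem addHom_ext {M : Type*} [AddZeroClass M] {φ ψ : Twist f V →+ M}
    (h : ∀ a v, φ (a ⊗ₜ v) = ψ (a ⊗ₜ v)) : φ = ψ := by
  ext z
  induction z using TensorProduct.induction_on with
  | zero => simp only [map_zero]
  | tmul a v => exact h a v
  | add z₁ z₂ h₁ h₂ => rw [map_add, map_add, h₁, h₂]

variable {R : Type*} [CommRing R] [Algebra R A]

theorem existsUnique_addHom_tmul (G : V →+ Twist f V ⊗[A] Ω[A⁄R])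
    (hG : ∀ (c : A) (v : V), G (c • v) = f c • G v + ((1 : A) ⊗ₜ[TwistSrc f] v) ⊗ₜ D R A (f c)) :
    ∃! conn : Twist f V →+ Twist f V ⊗[A] Ω[A⁄R], ∀ (a : A) (v : V),
      conn (a ⊗ₜ v) = ((1 : A) ⊗ₜ[TwistSrc f] v) ⊗ₜ D R A a + a • G v := by
  let conn₂ : A →+ V →+ Twist f V ⊗[A] Ω[A⁄R] :=
    AddMonoidHom.mk' (fun a => AddMonoidHom.mk'
        (fun v => ((1 : A) ⊗ₜ[TwistSrc f] v) ⊗ₜ D R A a + a • G v)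
        (fun v w => by
          simp only [TensorProduct.tmul_add, TensorProduct.add_tmul, map_add, smul_add]
          abel))
      (fun a b => by
        ext v
        simp only [AddMonoidHom.mk'_apply, AddMonoidHom.add_apply, map_add,
          TensorProduct.tmul_add, add_smul]
        abel)
  have hbal : ∀ (r : TwistSrc f) (a : A) (v : V), conn₂ (r • a) v = conn₂ a (r • v) := by
    intro (c : A) a v
    change ((1 : A) ⊗ₜ[TwistSrc f] v) ⊗ₜ D R A (f c * a) + (f c * a) • G v =
      ((1 : A) ⊗ₜ[TwistSrc f] (c • v)) ⊗ₜ D R A a + a • G (c • v)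
    rw [hG, one_tmul_smul, Derivation.leibniz, TensorProduct.tmul_add, TensorProduct.tmul_smul,
      TensorProduct.tmul_smul, ← TensorProduct.smul_tmul', smul_add, mul_smul, smul_comm a]
    abel
  exact ⟨TensorProduct.liftAddHom conn₂ hbal, fun a v => rfl,
    fun conn hconn => addHom_ext f (ψ := TensorProduct.liftAddHom conn₂ hbal) hconn⟩

theorem map_smul_of_map_tmul (G : V →+ Twist f V ⊗[A] Ω[A⁄R])
    (conn : Twist f V →+ Twist f V ⊗[A] Ω[A⁄R])
    (hconn : ∀ (a : A) (v : V),
      conn (a ⊗ₜ v) = ((1 : A) ⊗ₜ[TwistSrc f] v) ⊗ₜ D R A a + a • G v)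
    (r : A) (z : Twist f V) : conn (r • z) = z ⊗ₜ D R A r + r • conn z := by
  induction z using TensorProduct.induction_on with
  | zero => simp only [smul_zero, map_zero, TensorProduct.zero_tmul, add_zero]
  | tmul a v =>
    rw [TensorProduct.smul_tmul', smul_eq_mul, hconn, hconn, Derivation.leibniz,
      TensorProduct.tmul_add, TensorProduct.tmul_smul, TensorProduct.tmul_smul,
      tmul_eq_smul_one_tmul f a v, ← TensorProduct.smul_tmul', mul_smul, smul_add]
    abel
  | add z₁ z₂ h₁ h₂ =>
    rw [smul_add, map_add, h₁, h₂, map_add, TensorProduct.add_tmul, smul_add]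
    abel

end Twist

theorem TensorProduct.exists_eq_smul_of_map_mkQ_eq_zero {A M N : Type*} [CommRing A]
    [AddCommGroup M] [Module A M] [AddCommGroup N] [Module A N] (a : A) (u : M ⊗[A] N)
    (hu : TensorProduct.map (LinearMap.range (a • LinearMap.id : M →ₗ[A] M)).mkQ
      (LinearMap.range (a • LinearMap.id : N →ₗ[A] N)).mkQ u = 0) :
    ∃ w, u = a • w := by
  rw [← LinearMap.mem_ker, TensorProduct.map_ker (LinearMap.exact_map_mkQ_range _)
    (Submodule.mkQ_surjective _) (LinearMap.exact_map_mkQ_range _) (Submodule.mkQ_surjective _),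
    LinearMap.lTensor_smul, LinearMap.lTensor_id, LinearMap.rTensor_smul, LinearMap.rTensor_id,
    sup_idem] at hu
  obtain ⟨w, hw⟩ := hu
  exact ⟨w, hw.symm⟩

section FrobeniusPullback

open KaehlerDifferential

variable {R : Type*} {A : Type u} [CommRing R] [CommRing A] [Algebra R A] {p : ℕ}
  {Ft : A →+* A} {B : Type*} [AddCommGroup B] [Module A B] {Φ : Ω[A⁄R] →+ Ω[A⁄R]}
  {H : B ⊗[A] Ω[A⁄R] →+ Twist Ft B ⊗[A] Ω[A⁄R]}

theorem frobeniusPullback_smul (hH : ∀ b ω, H (b ⊗ₜ ω) = ((1 : A) ⊗ₜ[TwistSrc Ft] b) ⊗ₜ Φ ω)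
    (c : A) (u : B ⊗[A] Ω[A⁄R]) : H (c • u) = Ft c • H u := by
  induction u using TensorProduct.induction_on with
  | zero => simp only [smul_zero, map_zero]
  | tmul b ω =>
    rw [TensorProduct.smul_tmul', hH, hH, Twist.one_tmul_smul, ← TensorProduct.smul_tmul']
  | add u₁ u₂ h₁ h₂ => rw [smul_add, map_add, h₁, h₂, map_add, smul_add]

theorem exists_frobeniusPullback_eq_smul (hFt : ∀ x : A, Ft x - x ^ p ∈ Ideal.span {(p : A)})
    (hΦ : ∀ a b : A, Φ (a • D R A b) = Ft a • D R A (Ft b))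
    (hH : ∀ b ω, H (b ⊗ₜ ω) = ((1 : A) ⊗ₜ[TwistSrc Ft] b) ⊗ₜ Φ ω) (u : B ⊗[A] Ω[A⁄R]) :
    ∃ w, H u = (p : A) • w := by
  induction u using TensorProduct.induction_on with
  | zero => exact ⟨0, by simp only [map_zero, smul_zero]⟩
  | tmul b ω =>
    obtain ⟨η, hη⟩ := exists_pullback_eq_smul_of_frobeniusLift hFt Φ hΦ ω
    exact ⟨((1 : A) ⊗ₜ[TwistSrc Ft] b) ⊗ₜ η, by rw [hH, hη, TensorProduct.tmul_smul]⟩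
  | add u₁ u₂ h₁ h₂ =>
    obtain ⟨w₁, hw₁⟩ := h₁
    obtain ⟨w₂, hw₂⟩ := h₂
    exact ⟨w₁ + w₂, by rw [map_add, hw₁, hw₂, smul_add]⟩

theorem frobeniusPullback_smul_natCast_eq_zero (hp : (p : A) ^ 2 = 0)
    (hFt : ∀ x : A, Ft x - x ^ p ∈ Ideal.span {(p : A)})
    (hΦ : ∀ a b : A, Φ (a • D R A b) = Ft a • D R A (Ft b))
    (hH : ∀ b ω, H (b ⊗ₜ ω) = ((1 : A) ⊗ₜ[TwistSrc Ft] b) ⊗ₜ Φ ω) (u : B ⊗[A] Ω[A⁄R]) :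
    H ((p : A) • u) = 0 := by
  obtain ⟨w, hw⟩ := exists_frobeniusPullback_eq_smul hFt hΦ hH u
  rw [frobeniusPullback_smul hH, map_natCast, hw, smul_smul, ← sq, hp, zero_smul]

local notation "κ[" a ", " M "]" =>
  Submodule.mkQ (LinearMap.range (a • (LinearMap.id : M →ₗ[_] M)))

theorem frobeniusPullback_eq_of_map_mkQ_eq (hp : (p : A) ^ 2 = 0)
    (hFt : ∀ x : A, Ft x - x ^ p ∈ Ideal.span {(p : A)})
    (hΦ : ∀ a b : A, Φ (a • D R A b) = Ft a • D R A (Ft b))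
    (hH : ∀ b ω, H (b ⊗ₜ ω) = ((1 : A) ⊗ₜ[TwistSrc Ft] b) ⊗ₜ Φ ω) {u u' : B ⊗[A] Ω[A⁄R]}
    (huu' : TensorProduct.map κ[(p : A), B] κ[(p : A), Ω[A⁄R]] u =
      TensorProduct.map κ[(p : A), B] κ[(p : A), Ω[A⁄R]] u') :
    H u = H u' := by
  obtain ⟨w, hw⟩ := TensorProduct.exists_eq_smul_of_map_mkQ_eq_zero (p : A) (u - u')
    (by rw [map_sub, huu', sub_self])
  rw [← sub_eq_zero, ← map_sub H, hw, frobeniusPullback_smul_natCast_eq_zero hp hFt hΦ hH]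

theorem frobeniusPullback_lift_smul (hp : (p : A) ^ 2 = 0)
    (hFt : ∀ x : A, Ft x - x ^ p ∈ Ideal.span {(p : A)})
    (hΦ : ∀ a b : A, Φ (a • D R A b) = Ft a • D R A (Ft b))
    (hH : ∀ b ω, H (b ⊗ₜ ω) = ((1 : A) ⊗ₜ[TwistSrc Ft] b) ⊗ₜ Φ ω)
    (conn : _ →+ _ ⊗[A] _)
    (hconn : ∀ (c : A) m, conn (c • m) = m ⊗ₜ κ[(p : A), Ω[A⁄R]] (D R A c) + c • conn m)
    (L : B →+ B ⊗[A] Ω[A⁄R])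
    (hL : ∀ x, TensorProduct.map κ[(p : A), B] κ[(p : A), Ω[A⁄R]] (L x) = conn (κ[(p : A), B] x))
    (c : A) (x : B) :
    H (L (c • x)) = Ft c • H (L x) + ((1 : A) ⊗ₜ[TwistSrc Ft] x) ⊗ₜ D R A (Ft c) := by
  have hreduction : TensorProduct.map κ[(p : A), B] κ[(p : A), Ω[A⁄R]] (L (c • x)) =
      TensorProduct.map κ[(p : A), B] κ[(p : A), Ω[A⁄R]] (c • L x + x ⊗ₜ D R A c) := by
    rw [hL, LinearMap.map_smul, hconn, map_add, LinearMap.map_smul, hL, TensorProduct.map_tmul,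
      add_comm]
  have hΦD : Φ (D R A c) = D R A (Ft c) := by simpa using hΦ 1 c
  rw [frobeniusPullback_eq_of_map_mkQ_eq hp hFt hΦ hH hreduction, map_add,
    frobeniusPullback_smul hH, hH, hΦD]

end FrobeniusPullback

theorem frobenius_pullback_connection_general
    (p : ℕ) [Fact p.Prime]
    (k : Type u) [Field k] [CharP k p]
    (Rt : Type u) [CommRing Rt] [Algebra (TruncatedWittVector p 2 k) Rt]
    -- a free `R̃`-module `B`:
    (B : Type u) [AddCommGroup B] [Module Rt B]
    -- a Frobenius lift `F̃`:
    (Ft : Rt →+* Rt) (hFt : ∀ x : Rt, Ft x - x ^ p ∈ Ideal.span {(p : Rt)})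
    -- the pullback `F̃^*` of 1-forms, `a·db ↦ F̃(a)·d(F̃ b)`:
    (Φ : KaehlerDifferential (TruncatedWittVector p 2 k) Rt →+
      KaehlerDifferential (TruncatedWittVector p 2 k) Rt)
    (hΦ : ∀ a b : Rt,
      Φ (a • KaehlerDifferential.D (TruncatedWittVector p 2 k) Rt b) =
        Ft a • KaehlerDifferential.D (TruncatedWittVector p 2 k) Rt (Ft b))
    -- the induced map `H : B ⊗ Ω¹ → F̃^*B ⊗ Ω¹`, `b ⊗ ω ↦ (1 ⊗ b) ⊗ F̃^*ω`:
    (H : TensorProduct Rt B (KaehlerDifferential (TruncatedWittVector p 2 k) Rt) →+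
      TensorProduct Rt (Twist Ft B) (KaehlerDifferential (TruncatedWittVector p 2 k) Rt))
    (hH : ∀ (b : B) (ω : KaehlerDifferential (TruncatedWittVector p 2 k) Rt),
      H (b ⊗ₜ ω) = (((1 : Rt) ⊗ₜ[TwistSrc Ft] b : Twist Ft B)) ⊗ₜ[Rt] Φ ω) :
    -- `pB`, `B/pB`, `p·Ω¹`, `Ω¹_{R/k} = Ω¹/pΩ¹` and the reduction maps:
    let pB : Submodule Rt B := LinearMap.range ((p : Rt) • (LinearMap.id : B →ₗ[Rt] B))
    let pΩ : Submodule Rt (KaehlerDifferential (TruncatedWittVector p 2 k) Rt) :=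
      LinearMap.range ((p : Rt) • (LinearMap.id :
        KaehlerDifferential (TruncatedWittVector p 2 k) Rt →ₗ[Rt]
          KaehlerDifferential (TruncatedWittVector p 2 k) Rt))
    let κB := pB.mkQ
    let κΩ := pΩ.mkQ
    -- a connection `Dconn` on `B/pB` relative to `k`:
    ∀ Dconn : (B ⧸ pB) →+
        TensorProduct Rt (B ⧸ pB) (KaehlerDifferential (TruncatedWittVector p 2 k) Rt ⧸ pΩ),
      (∀ (f : Rt) (m : B ⧸ pB),
        Dconn (f • m) = m ⊗ₜ[Rt] (κΩ (KaehlerDifferential.D (TruncatedWittVector p 2 k) Rt f)) +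
          f • Dconn m) →
    -- an additive lift `∇′₀` of `Dconn`:
    ∀ L0 : B →+ TensorProduct Rt B (KaehlerDifferential (TruncatedWittVector p 2 k) Rt),
      (∀ x : B, TensorProduct.map κB κΩ (L0 x) = Dconn (κB x)) →
      -- (1) the formula `∇̃(f ⊗ x) = x ⊗ df + f·(F̃^*∇′₀)(x)` defines a unique additive map:
      (∃! nt : Twist Ft B →+
          TensorProduct Rt (Twist Ft B) (KaehlerDifferential (TruncatedWittVector p 2 k) Rt),
        ∀ (f : Rt) (x : B),
          nt (f ⊗ₜ[TwistSrc Ft] x) =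
            (((1 : Rt) ⊗ₜ[TwistSrc Ft] x : Twist Ft B)) ⊗ₜ[Rt]
              (KaehlerDifferential.D (TruncatedWittVector p 2 k) Rt f) + f • H (L0 x)) ∧
      -- and any such map
      (∀ nt : Twist Ft B →+
          TensorProduct Rt (Twist Ft B) (KaehlerDifferential (TruncatedWittVector p 2 k) Rt),
        (∀ (f : Rt) (x : B),
          nt (f ⊗ₜ[TwistSrc Ft] x) =
            (((1 : Rt) ⊗ₜ[TwistSrc Ft] x : Twist Ft B)) ⊗ₜ[Rt]
              (KaehlerDifferential.D (TruncatedWittVector p 2 k) Rt f) + f • H (L0 x)) →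
        -- (2) is a connection on `F̃^*B` relative to `W₂(k)`:
        (∀ (r : Rt) (z : Twist Ft B),
          nt (r • z) = z ⊗ₜ[Rt] (KaehlerDifferential.D (TruncatedWittVector p 2 k) Rt r) +
            r • nt z) ∧
        -- (3) is independent of the choice of the lift `∇′₀`:
        (∀ L1 : B →+ TensorProduct Rt B (KaehlerDifferential (TruncatedWittVector p 2 k) Rt),
          (∀ x : B, TensorProduct.map κB κΩ (L1 x) = Dconn (κB x)) →
          ∀ nt₁ : Twist Ft B →+
            TensorProduct Rt (Twist Ft B)
              (KaehlerDifferential (TruncatedWittVector p 2 k) Rt),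
          (∀ (f : Rt) (x : B),
            nt₁ (f ⊗ₜ[TwistSrc Ft] x) =
              (((1 : Rt) ⊗ₜ[TwistSrc Ft] x : Twist Ft B)) ⊗ₜ[Rt]
                (KaehlerDifferential.D (TruncatedWittVector p 2 k) Rt f) + f • H (L1 x)) →
          nt₁ = nt) ∧
        -- (4) reduces modulo `p` to the canonical Frobenius-pullback connection
        -- `f ⊗ x̄ ↦ x̄ ⊗ df` on `F^*(B/pB)`:
        (∀ (f : Rt) (x : B),
          nt (f ⊗ₜ[TwistSrc Ft] x) -
            (((1 : Rt) ⊗ₜ[TwistSrc Ft] x : Twist Ft B)) ⊗ₜ[Rt]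
              (KaehlerDifferential.D (TruncatedWittVector p 2 k) Rt f) ∈
            LinearMap.range ((p : Rt) • (LinearMap.id :
              TensorProduct Rt (Twist Ft B)
                  (KaehlerDifferential (TruncatedWittVector p 2 k) Rt) →ₗ[Rt]
                TensorProduct Rt (Twist Ft B)
                  (KaehlerDifferential (TruncatedWittVector p 2 k) Rt))))) := by
  intro pB pΩ κB κΩ Dconn hD L0 hL0
  have hp : (p : Rt) ^ 2 = 0 := TruncatedWittVector.natCast_sq_eq_zero_of_algebra p k Rt
  have hG := frobeniusPullback_lift_smul hp hFt hΦ hH Dconn hD L0 hL0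
  refine ⟨Twist.existsUnique_addHom_tmul Ft (H.comp L0) hG, fun nt hnt => ⟨?_, ?_, ?_⟩⟩
  · exact Twist.map_smul_of_map_tmul Ft (H.comp L0) nt hnt
  · intro L1 hL1 nt₁ hnt₁
    refine Twist.addHom_ext Ft fun f x => ?_
    rw [hnt₁, hnt,
      frobeniusPullback_eq_of_map_mkQ_eq hp hFt hΦ hH ((hL1 x).trans (hL0 x).symm)]
  · intro f x
    obtain ⟨w, hw⟩ := exists_frobeniusPullback_eq_smul hFt hΦ hH (L0 x)
    refine ⟨f • w, ?_⟩
    rw [LinearMap.smul_apply, LinearMap.id_apply, hnt, hw, smul_comm]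
    abel

theorem frobenius_pullback_connection
    (p : ℕ) [Fact p.Prime]
    (k : Type u) [Field k] [CharP k p] [PerfectRing k p]
    (Rt : Type u) [CommRing Rt] [Algebra (TruncatedWittVector p 2 k) Rt]
    (hRflat : Module.Flat (TruncatedWittVector p 2 k) Rt)
    -- a free `R̃`-module `B`:
    (B : Type u) [AddCommGroup B] [Module Rt B] [Module.Free Rt B]
    -- a Frobenius lift `F̃`:
    (Ft : Rt →+* Rt) (hFt : ∀ x : Rt, Ft x - x ^ p ∈ Ideal.span {(p : Rt)})
    -- the pullback `F̃^*` of 1-forms, `a·db ↦ F̃(a)·d(F̃ b)`: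
    (Φ : KaehlerDifferential (TruncatedWittVector p 2 k) Rt →+
      KaehlerDifferential (TruncatedWittVector p 2 k) Rt)
    (hΦ : ∀ a b : Rt,
      Φ (a • KaehlerDifferential.D (TruncatedWittVector p 2 k) Rt b) =
        Ft a • KaehlerDifferential.D (TruncatedWittVector p 2 k) Rt (Ft b))
    -- the induced map `H : B ⊗ Ω¹ → F̃^*B ⊗ Ω¹`, `b ⊗ ω ↦ (1 ⊗ b) ⊗ F̃^*ω`:
    (H : TensorProduct Rt B (KaehlerDifferential (TruncatedWittVector p 2 k) Rt) →+
      TensorProduct Rt (Twist Ft B) (KaehlerDifferential (TruncatedWittVector p 2 k) Rt))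
    (hH : ∀ (b : B) (ω : KaehlerDifferential (TruncatedWittVector p 2 k) Rt),
      H (b ⊗ₜ ω) = (((1 : Rt) ⊗ₜ[TwistSrc Ft] b : Twist Ft B)) ⊗ₜ[Rt] Φ ω) :
    -- `pB`, `B/pB`, `p·Ω¹`, `Ω¹_{R/k} = Ω¹/pΩ¹` and the reduction maps:
    let pB : Submodule Rt B := LinearMap.range ((p : Rt) • (LinearMap.id : B →ₗ[Rt] B))
    let pΩ : Submodule Rt (KaehlerDifferential (TruncatedWittVector p 2 k) Rt) :=
      LinearMap.range ((p : Rt) • (LinearMap.id :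
        KaehlerDifferential (TruncatedWittVector p 2 k) Rt →ₗ[Rt]
          KaehlerDifferential (TruncatedWittVector p 2 k) Rt))
    let κB := pB.mkQ
    let κΩ := pΩ.mkQ
    -- a connection `Dconn` on `B/pB` relative to `k`:
    ∀ Dconn : (B ⧸ pB) →+
        TensorProduct Rt (B ⧸ pB) (KaehlerDifferential (TruncatedWittVector p 2 k) Rt ⧸ pΩ),
      (∀ (f : Rt) (m : B ⧸ pB),
        Dconn (f • m) = m ⊗ₜ[Rt] (κΩ (KaehlerDifferential.D (TruncatedWittVector p 2 k) Rt f)) +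
          f • Dconn m) →
    -- an additive lift `∇′₀` of `Dconn`:
    ∀ L0 : B →+ TensorProduct Rt B (KaehlerDifferential (TruncatedWittVector p 2 k) Rt),
      (∀ x : B, TensorProduct.map κB κΩ (L0 x) = Dconn (κB x)) →
      -- (1) the formula `∇̃(f ⊗ x) = x ⊗ df + f·(F̃^*∇′₀)(x)` defines a unique additive map:
      (∃! nt : Twist Ft B →+
          TensorProduct Rt (Twist Ft B) (KaehlerDifferential (TruncatedWittVector p 2 k) Rt),
        ∀ (f : Rt) (x : B),
          nt (f ⊗ₜ[TwistSrc Ft] x) =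
            (((1 : Rt) ⊗ₜ[TwistSrc Ft] x : Twist Ft B)) ⊗ₜ[Rt]
              (KaehlerDifferential.D (TruncatedWittVector p 2 k) Rt f) + f • H (L0 x)) ∧
      -- and any such map
      (∀ nt : Twist Ft B →+
          TensorProduct Rt (Twist Ft B) (KaehlerDifferential (TruncatedWittVector p 2 k) Rt),
        (∀ (f : Rt) (x : B),
          nt (f ⊗ₜ[TwistSrc Ft] x) =
            (((1 : Rt) ⊗ₜ[TwistSrc Ft] x : Twist Ft B)) ⊗ₜ[Rt]
              (KaehlerDifferential.D (TruncatedWittVector p 2 k) Rt f) + f • H (L0 x)) →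
        -- (2) is a connection on `F̃^*B` relative to `W₂(k)`:
        (∀ (r : Rt) (z : Twist Ft B),
          nt (r • z) = z ⊗ₜ[Rt] (KaehlerDifferential.D (TruncatedWittVector p 2 k) Rt r) +
            r • nt z) ∧
        -- (3) is independent of the choice of the lift `∇′₀`:
        (∀ L1 : B →+ TensorProduct Rt B (KaehlerDifferential (TruncatedWittVector p 2 k) Rt),
          (∀ x : B, TensorProduct.map κB κΩ (L1 x) = Dconn (κB x)) →
          ∀ nt₁ : Twist Ft B →+
            TensorProduct Rt (Twist Ft B)
              (KaehlerDifferential (TruncatedWittVector p 2 k) Rt),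
          (∀ (f : Rt) (x : B),
            nt₁ (f ⊗ₜ[TwistSrc Ft] x) =
              (((1 : Rt) ⊗ₜ[TwistSrc Ft] x : Twist Ft B)) ⊗ₜ[Rt]
                (KaehlerDifferential.D (TruncatedWittVector p 2 k) Rt f) + f • H (L1 x)) →
          nt₁ = nt) ∧
        -- (4) reduces modulo `p` to the canonical Frobenius-pullback connection
        -- `f ⊗ x̄ ↦ x̄ ⊗ df` on `F^*(B/pB)`:
        (∀ (f : Rt) (x : B),
          nt (f ⊗ₜ[TwistSrc Ft] x) -
            (((1 : Rt) ⊗ₜ[TwistSrc Ft] x : Twist Ft B)) ⊗ₜ[Rt]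
              (KaehlerDifferential.D (TruncatedWittVector p 2 k) Rt f) ∈
            LinearMap.range ((p : Rt) • (LinearMap.id :
              TensorProduct Rt (Twist Ft B)
                  (KaehlerDifferential (TruncatedWittVector p 2 k) Rt) →ₗ[Rt]
                TensorProduct Rt (Twist Ft B)
                  (KaehlerDifferential (TruncatedWittVector p 2 k) Rt))))) :=
  frobenius_pullback_connection_general p k Rt B Ft hFt Φ hΦ H hH
end

section
/- Assume that Ω¹_{R̃/W₂(k)} is flat as a W₂(k)-module. Then: (i) for every η̃ ∈ Ω¹_{R̃/W₂(k)}, the pullback F̃*η̃ lies in p·Ω¹_{R̃/W₂(k)}; (ii) there is a unique additive map C⁻¹_{(R̃,F̃)}: Ω¹_{R/k} → Ω¹_{R/k} with the property that whenever η̃, ω̃ ∈ Ω¹_{R̃/W₂(k)} satisfy F̃*η̃ = p·ω̃, one has C⁻¹_{(R̃,F̃)}(η) = ω, where η and ω denote the images of η̃ and ω̃ in Ω¹_{R/k} under the base-change isomorphism; (iii) this map is Frobenius-semilinear: C⁻¹_{(R̃,F̃)}(r·η) = r^p·C⁻¹_{(R̃,F̃)}(η) for all r ∈ R, η ∈ Ω¹_{R/k}.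 (The map C⁻¹_{(R̃,F̃)} is the inverse Cartier operator "(1/p)F̃*".) -/
/-!
Statement 9: Let `k` be a perfect field of characteristic `p`, `W₂(k)` the length-two Witt
vectors, `R̃` a flat `W₂(k)`-algebra, `R = R̃/pR̃`, and `F̃ : R̃ → R̃` a lift of the Frobenius
of `R`.  Assume `Ω¹_{R̃/W₂(k)}` is flat as a `W₂(k)`-module.  Then:
(i) for every `η̃ ∈ Ω¹_{R̃/W₂(k)}`, the pullback `F̃^*η̃` lies in `p·Ω¹_{R̃/W₂(k)}`;
(ii) there is a unique additive map `C⁻¹ : Ω¹_{R/k} → Ω¹_{R/k}` with `C⁻¹(η) = ω` whenever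
`F̃^*η̃ = p·ω̃`;
(iii) `C⁻¹` is Frobenius-semilinear: `C⁻¹(r·η) = r^p·C⁻¹(η)`.

The pullback `F̃^*` of 1-forms along `F̃` is the (unique) additive map `Φ` on `Ω¹_{R̃/W₂(k)}`
with `Φ(a·db) = F̃(a)·d(F̃ b)`; we take it as a hypothesis with this defining property.
Via the base-change isomorphism `Ω¹_{R̃/W₂(k)} ⊗_{R̃} R ≅ Ω¹_{R/k}` (see the context), we
realize `Ω¹_{R/k}` as the quotient `Ω¹_{R̃/W₂(k)} / p·Ω¹_{R̃/W₂(k)}`, and elements of `R` as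
reductions of elements of `R̃`.
-/

set_option synthInstance.maxHeartbeats 1000000
set_option maxHeartbeats 1000000

universe u

open TensorProduct in
lemma aux_flat_tors {A : Type*} {M : Type*} [CommRing A] [AddCommGroup M] [Module A M]
    [Module.Flat A M] (a : A) (h : ∀ b : A, a * b = 0 → ∃ c, b = a * c)
    (x : M) (hx : a • x = 0) : ∃ y, x = a • y := by
  classical
  set I : Ideal A := Ideal.span {a} with hI
  have haI : a ∈ I := Ideal.mem_span_singleton_self a
  set q : A →ₗ[A] I := LinearMap.toSpanSingleton A I ⟨a, haI⟩ with hq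
  have hqval : ∀ b : A, ((q b : I) : A) = b * a := by
    intro b
    simp [hq, LinearMap.toSpanSingleton_apply, smul_eq_mul]
  have hqsurj : Function.Surjective q := by
    rintro ⟨z, hz⟩
    obtain ⟨c, hc⟩ := Ideal.mem_span_singleton'.mp hz
    exact ⟨c, Subtype.ext (by rw [hqval]; exact hc)⟩
  have hexact : Function.Exact (LinearMap.ker q).subtype q :=
    LinearMap.exact_iff.mpr (by rw [Submodule.range_subtype])
  have hex2 := rTensor_exact (R := A) M hexact hqsurj
  have hinj : Function.Injective (LinearMap.rTensor M I.subtype) :=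
    Module.Flat.rTensor_preserves_injective_linearMap I.subtype I.injective_subtype
  set t : A ⊗[A] M := 1 ⊗ₜ x with ht
  have h1 : LinearMap.rTensor M I.subtype (LinearMap.rTensor M q t) = 0 := by
    have e1 : LinearMap.rTensor M q t = (q 1) ⊗ₜ x := by simp [ht]
    rw [e1]
    have e2 : LinearMap.rTensor M I.subtype ((q 1) ⊗ₜ x) = ((q 1 : I) : A) ⊗ₜ x := by simp
    rw [e2, hqval, one_mul]
    calc a ⊗ₜ[A] x = (a • (1 : A)) ⊗ₜ x := by rw [smul_eq_mul, mul_one]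
      _ = (1 : A) ⊗ₜ (a • x) := TensorProduct.smul_tmul a 1 x
      _ = 0 := by rw [hx, TensorProduct.tmul_zero]
  have h3 : LinearMap.rTensor M q t = 0 := hinj (by rw [h1, map_zero])
  obtain ⟨u, hu⟩ := (hex2 t).mp h3
  have main : ∀ u : (LinearMap.ker q) ⊗[A] M,
      ∃ y, TensorProduct.lid A M (LinearMap.rTensor M (LinearMap.ker q).subtype u) = a • y := by
    intro u
    induction u using TensorProduct.induction_on with
    | zero => exact ⟨0, by simp⟩
    | tmul kk m =>
      obtain ⟨c, hc⟩ := h kk.1 (by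
        have h4 : q kk.1 = 0 := kk.2
        have h5 := congrArg Subtype.val h4
        rw [hqval] at h5
        simpa [mul_comm] using h5)
      refine ⟨c • m, ?_⟩
      rw [LinearMap.rTensor_tmul, Submodule.coe_subtype, TensorProduct.lid_tmul, hc, mul_smul]
    | add u v ihu ihv =>
      obtain ⟨y1, hy1⟩ := ihu
      obtain ⟨y2, hy2⟩ := ihv
      exact ⟨y1 + y2, by rw [map_add, map_add, hy1, hy2, smul_add]⟩
  obtain ⟨y, hy⟩ := main u
  refine ⟨y, ?_⟩
  rw [hu] at hy
  rw [← hy, ht, TensorProduct.lid_tmul, one_smul]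

lemma aux_witt_tors (p : ℕ) [hp : Fact p.Prime] (k : Type u) [Field k] [CharP k p]
    [PerfectRing k p] (b : TruncatedWittVector p 2 k)
    (hb : (p : TruncatedWittVector p 2 k) * b = 0) :
    ∃ c, b = (p : TruncatedWittVector p 2 k) * c := by
  classical
  set X : WittVector p k := b.out with hXdef
  have hXb : WittVector.truncate 2 X = b := by
    apply TruncatedWittVector.ext
    intro i
    rw [WittVector.coeff_truncate, TruncatedWittVector.coeff_out]
  have htr : WittVector.truncate 2 ((p : WittVector p k) * X) = 0 := by
    rw [map_mul, map_natCast, hXb, hb]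
  have hcoeff1 : ((p : WittVector p k) * X).coeff 1 = 0 := by
    have h : TruncatedWittVector.coeff (1 : Fin 2)
        (WittVector.truncate 2 ((p : WittVector p k) * X)) =
        TruncatedWittVector.coeff (1 : Fin 2) (0 : TruncatedWittVector p 2 k) := by rw [htr]
    rw [WittVector.coeff_truncate, TruncatedWittVector.coeff_zero] at h
    simpa using h
  have hv : (p : WittVector p k) * X = WittVector.verschiebung (WittVector.frobenius X) := by
    rw [WittVector.verschiebung_frobenius, mul_comm]
  have h0 : X.coeff 0 = 0 := by
    have h1 : ((p : WittVector p k) * X).coeff 1 = X.coeff 0 ^ p := by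
      rw [hv]
      have h2 := WittVector.verschiebung_coeff_add_one (WittVector.frobenius X) 0
      simpa [WittVector.coeff_frobenius_charP] using h2
    rw [hcoeff1] at h1
    exact (pow_eq_zero_iff hp.out.ne_zero).mp h1.symm
  have hXZ : ∃ Z, X = WittVector.verschiebung Z := by
    refine ⟨WittVector.mk p (fun n => X.coeff (n + 1)), ?_⟩
    apply WittVector.ext
    intro n
    cases n with
    | zero => rw [WittVector.verschiebung_coeff_zero, h0]
    | succ m => simp [WittVector.verschiebung_coeff_succ, WittVector.coeff_mk]
  obtain ⟨Z, hZ⟩ := hXZ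
  obtain ⟨Z', hZ'⟩ := (WittVector.frobenius_bijective p k).surjective Z
  have hXp : X = (p : WittVector p k) * Z' := by
    rw [hZ, ← hZ', WittVector.verschiebung_frobenius, mul_comm]
  refine ⟨WittVector.truncate 2 Z', ?_⟩
  rw [← hXb, hXp, map_mul, map_natCast]

theorem inverse_cartier_operator_on_one_forms
    (p : ℕ) [Fact p.Prime]
    (k : Type u) [Field k] [CharP k p] [PerfectRing k p]
    (Rt : Type u) [CommRing Rt] [Algebra (TruncatedWittVector p 2 k) Rt]
    (hRflat : Module.Flat (TruncatedWittVector p 2 k) Rt)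
    -- `Ω¹_{R̃/W₂(k)}` is flat as a `W₂(k)`-module:
    (hΩflat : Module.Flat (TruncatedWittVector p 2 k)
      (KaehlerDifferential (TruncatedWittVector p 2 k) Rt))
    -- a Frobenius lift `F̃`:
    (Ft : Rt →+* Rt) (hFt : ∀ x : Rt, Ft x - x ^ p ∈ Ideal.span {(p : Rt)})
    -- the pullback `F̃^* : Ω¹_{R̃/W₂(k)} → Ω¹_{R̃/W₂(k)}`, `a·db ↦ F̃(a)·d(F̃ b)`:
    (Φ : KaehlerDifferential (TruncatedWittVector p 2 k) Rt →+
      KaehlerDifferential (TruncatedWittVector p 2 k) Rt)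
    (hΦ : ∀ a b : Rt,
      Φ (a • KaehlerDifferential.D (TruncatedWittVector p 2 k) Rt b) =
        Ft a • KaehlerDifferential.D (TruncatedWittVector p 2 k) Rt (Ft b)) :
    -- `p·Ω¹_{R̃/W₂(k)}`:
    let pΩ : Submodule Rt (KaehlerDifferential (TruncatedWittVector p 2 k) Rt) :=
      LinearMap.range ((p : Rt) • (LinearMap.id :
        KaehlerDifferential (TruncatedWittVector p 2 k) Rt →ₗ[Rt]
          KaehlerDifferential (TruncatedWittVector p 2 k) Rt))
    -- reduction modulo `p`, realizing `Ω¹_{R/k}` as `Ω¹_{R̃/W₂(k)}/p`: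
    let π := pΩ.mkQ
    -- (i):
    (∀ η : KaehlerDifferential (TruncatedWittVector p 2 k) Rt, Φ η ∈ pΩ) ∧
    -- (ii):
    (∃! c : (KaehlerDifferential (TruncatedWittVector p 2 k) Rt ⧸ pΩ) →+
        (KaehlerDifferential (TruncatedWittVector p 2 k) Rt ⧸ pΩ),
      ∀ η ω : KaehlerDifferential (TruncatedWittVector p 2 k) Rt,
        Φ η = (p : Rt) • ω → c (π η) = π ω) ∧
    -- (iii):
    (∀ c : (KaehlerDifferential (TruncatedWittVector p 2 k) Rt ⧸ pΩ) →+
        (KaehlerDifferential (TruncatedWittVector p 2 k) Rt ⧸ pΩ),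
      (∀ η ω : KaehlerDifferential (TruncatedWittVector p 2 k) Rt,
        Φ η = (p : Rt) • ω → c (π η) = π ω) →
      ∀ (r : Rt) (η : KaehlerDifferential (TruncatedWittVector p 2 k) Rt ⧸ pΩ),
        c (r • η) = (r ^ p) • c η) := by
  intro pΩ π
  classical
  haveI := hΩflat
  have hpΩ : ∀ x : KaehlerDifferential (TruncatedWittVector p 2 k) Rt,
      x ∈ pΩ ↔ ∃ y, x = (p : Rt) • y := by
    intro x
    constructor
    · intro hx
      obtain ⟨y, hy⟩ := LinearMap.mem_range.mp hx
      exact ⟨y, by simpa using hy.symm⟩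
    · rintro ⟨y, rfl⟩
      exact LinearMap.mem_range.mpr ⟨y, by simp⟩
  have L1 : ∀ (r : Rt) (η : KaehlerDifferential (TruncatedWittVector p 2 k) Rt),
      Φ (r • η) = Ft r • Φ η := by
    have H : ∀ η ∈ Submodule.span Rt
        (Set.range (KaehlerDifferential.D (TruncatedWittVector p 2 k) Rt)),
        ∀ r : Rt, Φ (r • η) = Ft r • Φ η := by
      intro η hη
      induction hη using Submodule.span_induction with
      | mem x hx =>
        obtain ⟨b, rfl⟩ := hx
        intro r
        have h2 := hΦ 1 b
        rw [one_smul, map_one, one_smul] at h2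
        rw [hΦ r b, h2]
      | zero => intro r; simp
      | add x y hx hy ihx ihy =>
        intro r; rw [smul_add, map_add, ihx r, ihy r, map_add, smul_add]
      | smul s x hx ihx =>
        intro r; rw [smul_smul, ihx (r * s), map_mul, mul_smul, ihx s]
    intro r η
    exact H η (by rw [KaehlerDifferential.span_range_derivation]; trivial) r
  have key : ∀ η : KaehlerDifferential (TruncatedWittVector p 2 k) Rt,
      ∃ ω, Φ η = (p : Rt) • ω := by
    have H : ∀ η ∈ Submodule.span Rt
        (Set.range (KaehlerDifferential.D (TruncatedWittVector p 2 k) Rt)),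
        ∃ ω, Φ η = (p : Rt) • ω := by
      intro η hη
      induction hη using Submodule.span_induction with
      | mem x hx =>
        obtain ⟨b, rfl⟩ := hx
        obtain ⟨s, hs⟩ := Ideal.mem_span_singleton'.mp (hFt b)
        have hFtb : Ft b = b ^ p + (p : Rt) * s := by
          rw [mul_comm (p : Rt) s, hs]; ring
        have h2 := hΦ 1 b
        rw [one_smul, map_one, one_smul] at h2
        refine ⟨(b ^ (p - 1)) • KaehlerDifferential.D (TruncatedWittVector p 2 k) Rt b
            + KaehlerDifferential.D (TruncatedWittVector p 2 k) Rt s, ?_⟩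
        rw [h2, hFtb, map_add, Derivation.leibniz_pow, Derivation.leibniz,
          Derivation.map_natCast, smul_zero, add_zero,
          ← Nat.cast_smul_eq_nsmul Rt p ((b ^ (p - 1)) •
            KaehlerDifferential.D (TruncatedWittVector p 2 k) Rt b), smul_add]
      | zero => exact ⟨0, by simp⟩
      | add x y hx hy ihx ihy =>
        obtain ⟨ω₁, h1⟩ := ihx
        obtain ⟨ω₂, h2⟩ := ihy
        exact ⟨ω₁ + ω₂, by rw [map_add, h1, h2, smul_add]⟩
      | smul s x hx ihx =>
        obtain ⟨ω, hω⟩ := ihx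
        refine ⟨Ft s • ω, ?_⟩
        rw [L1 s x, hω, smul_smul, smul_smul, mul_comm]
    intro η
    exact H η (by rw [KaehlerDifferential.span_range_derivation]; trivial)
  have parti : ∀ η, Φ η ∈ pΩ := fun η => (hpΩ _).mpr (key η)
  have tors : ∀ x : KaehlerDifferential (TruncatedWittVector p 2 k) Rt,
      (p : Rt) • x = 0 → x ∈ pΩ := by
    intro x hx
    have hx' : ((p : ℕ) : TruncatedWittVector p 2 k) • x = 0 := by
      rw [Nat.cast_smul_eq_nsmul, ← Nat.cast_smul_eq_nsmul Rt]
      exact hx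
    obtain ⟨y, hy⟩ := aux_flat_tors (A := TruncatedWittVector p 2 k)
      ((p : ℕ) : TruncatedWittVector p 2 k)
      (fun b hb => aux_witt_tors p k b hb) x hx'
    refine (hpΩ x).mpr ⟨y, ?_⟩
    rw [hy, Nat.cast_smul_eq_nsmul, ← Nat.cast_smul_eq_nsmul Rt]
  have hπ_eq : ∀ x y : KaehlerDifferential (TruncatedWittVector p 2 k) Rt,
      (π x = π y ↔ x - y ∈ pΩ) := fun x y => Submodule.Quotient.eq pΩ
  have Wd : ∀ η η' ω ω' : KaehlerDifferential (TruncatedWittVector p 2 k) Rt,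
      π η = π η' → Φ η = (p : Rt) • ω → Φ η' = (p : Rt) • ω' → π ω = π ω' := by
    intro η η' ω ω' hππ h1 h2
    obtain ⟨ξ, hξ⟩ := (hpΩ _).mp ((hπ_eq _ _).mp hππ)
    have h4 : Φ (η - η') = (p : Rt) • (ω - ω') := by rw [map_sub, h1, h2, smul_sub]
    have h5 : Φ (η - η') = (p : Rt) • Φ ξ := by
      rw [hξ, Nat.cast_smul_eq_nsmul Rt, map_nsmul, ← Nat.cast_smul_eq_nsmul Rt]
    have h3 : (p : Rt) • (ω - ω' - Φ ξ) = 0 := by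
      rw [smul_sub, ← h4, ← h5, sub_self]
    have h6 : ω - ω' - Φ ξ ∈ pΩ := tors _ h3
    have h7 : ω - ω' ∈ pΩ := by
      have h8 := pΩ.add_mem h6 (parti ξ)
      simpa using h8
    exact (hπ_eq _ _).mpr h7
  have hsurj : Function.Surjective π := Submodule.mkQ_surjective pΩ
  choose w hw using key
  set f : (KaehlerDifferential (TruncatedWittVector p 2 k) Rt ⧸ pΩ) →
      (KaehlerDifferential (TruncatedWittVector p 2 k) Rt ⧸ pΩ) :=
    fun q => π (w (Classical.choose (hsurj q))) with hfdef
  have hfπ : ∀ η ω, Φ η = (p : Rt) • ω → f (π η) = π ω := by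
    intro η ω hηω
    exact Wd (Classical.choose (hsurj (π η))) η _ ω
      (Classical.choose_spec (hsurj (π η))) (hw _) hηω
  have hadd : ∀ q q', f (q + q') = f q + f q' := by
    intro q q'
    obtain ⟨η, rfl⟩ := hsurj q
    obtain ⟨η', rfl⟩ := hsurj q'
    have e1 : π η + π η' = π (η + η') := (map_add π η η').symm
    rw [e1, hfπ (η + η') (w η + w η') (by rw [map_add, hw η, hw η', smul_add]),
      map_add, hfπ η (w η) (hw η), hfπ η' (w η') (hw η')]
  refine ⟨parti, ⟨AddMonoidHom.mk' f hadd, ?_, ?_⟩, ?_⟩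
  · intro η ω hηω
    exact hfπ η ω hηω
  · intro c' hc'
    ext q
    obtain ⟨η, rfl⟩ := hsurj q
    rw [hc' η (w η) (hw η)]
    exact (hfπ η (w η) (hw η)).symm
  · intro c hc r q
    obtain ⟨η, rfl⟩ := hsurj q
    obtain ⟨s, hs⟩ := Ideal.mem_span_singleton'.mp (hFt r)
    have h2 : Φ (r • η) = (p : Rt) • (Ft r • w η) := by
      rw [L1 r η, hw η, smul_smul, smul_smul, mul_comm]
    have e1 : r • π η = π (r • η) := (map_smul π r η).symm
    rw [e1, hc _ _ h2, hc _ _ (hw η)]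
    have e2 : (r ^ p) • π (w η) = π ((r ^ p) • w η) := (map_smul π (r ^ p) (w η)).symm
    rw [e2]
    refine (hπ_eq _ _).mpr ((hpΩ _).mpr ⟨s • w η, ?_⟩)
    rw [← sub_smul, ← hs, smul_smul, mul_comm]
end
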